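/- For every n ≥ 1 and all p, a ∈ V_n with a ≠ 0, the symplectic transvection t_p fixes C_a setwise if and only if ⟨p,a⟩ = 0, and for all p, a ∈ V_n with p ≠ 0, t_p fixes H_a setwise if and only if Q_a(p) = 1. -/

import Mathlib

/-- The symplectic vector space `V_n = (ZMod 2)^(2n)` of the n-qubit real Pauli group. -/
abbrev V (n : ℕ) : Type := Fin (2 * n) → ZMod 2

/-- The index `2i-1` (0-based: `2i`). -/
def i0 {n : ℕ} (i : Fin n) : Fin (2 * n) := ⟨2 * i.1, by have := i.isLt; omega⟩

/-- The index `2i` (0-based: `2i+1`). -/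
def i1 {n : ℕ} (i : Fin n) : Fin (2 * n) := ⟨2 * i.1 + 1, by have := i.isLt; omega⟩

/-- The symplectic form `⟨x,y⟩ = Σ_{i=1}^n (x_{2i−1} y_{2i} + x_{2i} y_{2i−1})`. -/
def sform {n : ℕ} (x y : V n) : ZMod 2 :=
  ∑ i : Fin n, (x (i0 i) * y (i1 i) + x (i1 i) * y (i0 i))

/-- The point set `P = V_n \ {0}` of the incidence geometry `G_n`. -/
def P (n : ℕ) : Set (V n) := {x | x ≠ 0}

/-- The line set `L = {{a,b,a+b} : a,b ∈ P, a ≠ b, ⟨a,b⟩ = 0}` of `G_n`. -/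
def Lines (n : ℕ) : Set (Set (V n)) :=
  {l | ∃ a b : V n, a ∈ P n ∧ b ∈ P n ∧ a ≠ b ∧ sform a b = 0 ∧ l = {a, b, a + b}}

/-- A subset `H ⊆ P` satisfies condition (H1) if every line meets it in exactly
one point or is contained in it. -/
def IsH1 {n : ℕ} (H : Set (V n)) : Prop :=
  H ⊆ P n ∧ ∀ l ∈ Lines n, (H ∩ l).ncard = 1 ∨ l ⊆ H

/-- A geometric hyperplane: a subset satisfying (H1) which is not the full point set. -/
def IsHyperplane {n : ℕ} (H : Set (V n)) : Prop := IsH1 H ∧ H ≠ P n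

/-- `A ⊞ B`: the complement in `P` of the symmetric difference of `A` and `B`. -/
def boxAdd {n : ℕ} (A B : Set (V n)) : Set (V n) := P n \ (symmDiff A B)

/-- The quadratic form `Q_0(x) = Σ_{i=1}^n x_{2i−1} x_{2i}`. -/
def Q0 {n : ℕ} (x : V n) : ZMod 2 := ∑ i : Fin n, x (i0 i) * x (i1 i)

/-- The quadratic form `Q_p(x) = Q_0(x) + ⟨p,x⟩`. -/
def Qf {n : ℕ} (p x : V n) : ZMod 2 := Q0 x + sform p x

/-- The perp-set hyperplane `C_p = {x ∈ P : ⟨p,x⟩ = 0}`. -/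
def Cset {n : ℕ} (p : V n) : Set (V n) := {x ∈ P n | sform p x = 0}

/-- The quadric hyperplane `H_p = {x ∈ P : Q_p(x) = 0}`. -/
def Hset {n : ℕ} (p : V n) : Set (V n) := {x ∈ P n | Qf p x = 0}

/-- The symplectic transvection `t_p : x ↦ x + ⟨p,x⟩·p`. -/
def tv {n : ℕ} (p : V n) (x : V n) : V n := x + sform p x • p

/-
Over `ZMod 2` the transvection `t_p` changes `⟨a, x⟩` by `⟨p, x⟩ ⟨p, a⟩` and `Q_a(x)` by
`⟨p, x⟩ (Q_a(p) + 1)`, and it is an involution fixing `0`; so `t_p` stabilises `C_a`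
(resp. `H_a`) exactly when that correction vanishes on it. The point `a ∈ C_a` shows this
forces `⟨p, a⟩ = 0`. For `H_a`, nondegeneracy gives `x` with `⟨p, x⟩ = 1`, and one of `x`,
`x + p` lies in `H_a` when `Q_a(p) = 0`, so the correction cannot vanish on `H_a` unless
`Q_a(p) = 1`.
-/

theorem Function.Involutive.image_eq_self_iff_mapsTo {α : Type*} {f : α → α}
    (hf : f.Involutive) {s : Set α} : f '' s = s ↔ Set.MapsTo f s s :=
  ⟨fun h _ hx => h ▸ Set.mem_image_of_mem f hx,
    fun h => h.image_subset.antisymm fun x hx => ⟨f x, h hx, hf x⟩⟩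

theorem zmod_two_eq_zero_or_eq_one (z : ZMod 2) : z = 0 ∨ z = 1 := by
  revert z; decide

theorem zmod_two_mul_self (z : ZMod 2) : z * z = z := by
  revert z; decide

section Symplectic

variable {n : ℕ}

theorem sform_comm (x y : V n) : sform x y = sform y x := by
  unfold sform
  exact Finset.sum_congr rfl fun _ _ => by ring

theorem sform_self (x : V n) : sform x x = 0 := by
  unfold sform
  exact Finset.sum_eq_zero fun _ _ => by rw [mul_comm]; exact CharTwo.add_self_eq_zero _

theorem sform_zero_right (p : V n) : sform p 0 = 0 := by
  simp [sform]

theorem sform_add_right (p x y : V n) : sform p (x + y) = sform p x + sform p y := by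
  unfold sform
  rw [← Finset.sum_add_distrib]
  exact Finset.sum_congr rfl fun _ _ => by simp only [Pi.add_apply]; ring

theorem sform_smul_right (p : V n) (c : ZMod 2) (x : V n) :
    sform p (c • x) = c * sform p x := by
  unfold sform
  rw [Finset.mul_sum]
  exact Finset.sum_congr rfl fun _ _ => by simp only [Pi.smul_apply, smul_eq_mul]; ring

theorem Q0_add (x y : V n) : Q0 (x + y) = Q0 x + Q0 y + sform x y := by
  unfold Q0 sform
  rw [← Finset.sum_add_distrib, ← Finset.sum_add_distrib]
  exact Finset.sum_congr rfl fun _ _ => by simp only [Pi.add_apply]; ring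

theorem Q0_smul (c : ZMod 2) (x : V n) : Q0 (c • x) = c * Q0 x := by
  unfold Q0
  rw [Finset.mul_sum]
  refine Finset.sum_congr rfl fun i _ => ?_
  simp only [Pi.smul_apply, smul_eq_mul]
  calc c * x (i0 i) * (c * x (i1 i)) = (c * c) * (x (i0 i) * x (i1 i)) := by ring
    _ = c * (x (i0 i) * x (i1 i)) := by rw [zmod_two_mul_self]

theorem Qf_add (a x y : V n) : Qf a (x + y) = Qf a x + Qf a y + sform x y := by
  unfold Qf
  rw [Q0_add, sform_add_right]
  ring

theorem Qf_smul (a : V n) (c : ZMod 2) (x : V n) : Qf a (c • x) = c * Qf a x := by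
  unfold Qf
  rw [Q0_smul, sform_smul_right]
  ring

theorem exists_eq_i0_or_eq_i1 (j : Fin (2 * n)) : ∃ i : Fin n, j = i0 i ∨ j = i1 i :=
  ⟨⟨j / 2, by omega⟩, by simp only [i0, i1, Fin.ext_iff]; omega⟩

theorem i0_injective : Function.Injective (i0 : Fin n → Fin (2 * n)) := fun i j h => by
  simp only [i0, Fin.ext_iff] at h ⊢; omega

theorem i1_injective : Function.Injective (i1 : Fin n → Fin (2 * n)) := fun i j h => by
  simp only [i1, Fin.ext_iff] at h ⊢; omega

theorem i0_ne_i1 (i j : Fin n) : i0 i ≠ i1 j := by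
  simp only [i0, i1, ne_eq, Fin.ext_iff]; omega

theorem sform_single_i0 (p : V n) (i : Fin n) : sform p (Pi.single (i0 i) 1) = p (i1 i) := by
  simp [sform, Pi.single_apply, i0_injective.eq_iff, (i0_ne_i1 _ _).symm]

theorem sform_single_i1 (p : V n) (i : Fin n) : sform p (Pi.single (i1 i) 1) = p (i0 i) := by
  simp [sform, Pi.single_apply, i1_injective.eq_iff, i0_ne_i1]

theorem eq_zero_of_forall_sform_eq_zero {p : V n} (h : ∀ x, sform p x = 0) : p = 0 := by
  funext j
  obtain ⟨i, rfl | rfl⟩ := exists_eq_i0_or_eq_i1 j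
  · rw [← sform_single_i1 p i, h, Pi.zero_apply]
  · rw [← sform_single_i0 p i, h, Pi.zero_apply]

theorem exists_sform_eq_one {p : V n} (hp : p ≠ 0) : ∃ x, sform p x = 1 := by
  by_contra! h
  exact hp <| eq_zero_of_forall_sform_eq_zero fun x =>
    (zmod_two_eq_zero_or_eq_one _).resolve_right (h x)

theorem sform_tv (a p x : V n) : sform a (tv p x) = sform a x + sform p x * sform a p := by
  rw [tv, sform_add_right, sform_smul_right]

theorem Qf_tv (a p x : V n) : Qf a (tv p x) = Qf a x + sform p x * (Qf a p + 1) := by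
  rw [tv, Qf_add, Qf_smul, sform_smul_right, sform_comm x p, zmod_two_mul_self]
  ring

theorem tv_involutive (p : V n) : Function.Involutive (tv p) := fun x => by
  have h : sform p (tv p x) = sform p x := by rw [sform_tv, sform_self, mul_zero, add_zero]
  rw [tv, h, tv, add_assoc, ← add_smul, CharTwo.add_self_eq_zero, zero_smul, add_zero]

theorem tv_ne_zero (p : V n) {x : V n} (hx : x ≠ 0) : tv p x ≠ 0 := by
  have h0 : tv p 0 = 0 := by rw [tv, sform_zero_right, zero_smul, add_zero]
  exact (tv_involutive p).injective.ne_iff' h0 |>.mpr hx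

theorem mapsTo_tv_Cset_iff {p a : V n} (ha : a ≠ 0) :
    Set.MapsTo (tv p) (Cset a) (Cset a) ↔ sform p a = 0 := by
  constructor
  · intro h
    have h_tv_a := (h ⟨ha, sform_self a⟩).2
    rwa [sform_tv, sform_self, sform_comm a p, zmod_two_mul_self, zero_add] at h_tv_a
  · rintro h x ⟨hx, hax⟩
    exact ⟨tv_ne_zero p hx, by rw [sform_tv, hax, sform_comm a p, h, mul_zero, add_zero]⟩

theorem exists_mem_Hset_sform_eq_one {p a : V n} (hp : p ≠ 0) (hap : Qf a p = 0) :
    ∃ x ∈ Hset a, sform p x = 1 := by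
  have mem_P : ∀ {y : V n}, sform p y = 1 → y ∈ P n := fun hy h0 => by
    rw [h0, sform_zero_right] at hy
    exact zero_ne_one hy
  obtain ⟨x, hx⟩ := exists_sform_eq_one hp
  rcases zmod_two_eq_zero_or_eq_one (Qf a x) with hax | hax
  · exact ⟨x, ⟨mem_P hx, hax⟩, hx⟩
  · have hxp : sform p (x + p) = 1 := by rw [sform_add_right, sform_self, add_zero, hx]
    refine ⟨x + p, ⟨mem_P hxp, ?_⟩, hxp⟩
    rw [Qf_add, hax, hap, sform_comm, hx]
    decide

theorem mapsTo_tv_Hset_iff {p a : V n} (hp : p ≠ 0) :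
    Set.MapsTo (tv p) (Hset a) (Hset a) ↔ Qf a p = 1 := by
  constructor
  · intro h
    refine (zmod_two_eq_zero_or_eq_one (Qf a p)).resolve_left fun hap => ?_
    obtain ⟨x, hx, hpx⟩ := exists_mem_Hset_sform_eq_one hp hap
    have h_tv_x := (h hx).2
    rw [Qf_tv, hx.2, hpx, hap] at h_tv_x
    exact absurd h_tv_x (by decide)
  · rintro h x ⟨hx, hax⟩
    exact ⟨tv_ne_zero p hx, by rw [Qf_tv, hax, h, CharTwo.add_self_eq_zero, mul_zero, add_zero]⟩

end Symplectic

theorem stmt14_general (n : ℕ) :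
    (∀ p a : V n, a ≠ 0 → (tv p '' Cset a = Cset a ↔ sform p a = 0)) ∧
    (∀ p a : V n, p ≠ 0 → (tv p '' Hset a = Hset a ↔ Qf a p = 1)) :=
  ⟨fun p _ ha => (tv_involutive p).image_eq_self_iff_mapsTo.trans (mapsTo_tv_Cset_iff ha),
    fun p _ hp => (tv_involutive p).image_eq_self_iff_mapsTo.trans (mapsTo_tv_Hset_iff hp)⟩

theorem stmt14 (n : ℕ) (hn : 1 ≤ n) :
    (∀ p a : V n, a ≠ 0 → (tv p '' Cset a = Cset a ↔ sform p a = 0)) ∧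
    (∀ p a : V n, p ≠ 0 → (tv p '' Hset a = Hset a ↔ Qf a p = 1)) :=
  stmt14_general n
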